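/- In K(x,y): (i) if f is a K-linear combination of the monomials (x·y)·y, x·y², y² and ∂_x(f) = ∂_y(f) = 0, then f = 0 (there is no train Peirce-evanescent identity of degree (1,2)); (ii) for every n ≥ 2 and every commutative nonassociative monomial w of bidegree (n,2) in (x,y) with w ≠ (x^{{n}}y)·y and w ≠ x^{{n}}y², there exists a unique element P_w of the K-linear span of {(x^{{r}}y)·y : 1 ≤ r ≤ n} ∪ {x^{{s}}y² : 0 ≤ s ≤ n} such that ε(P_w) = 1 and ∂_x(w − P_w) = ∂_y(w − P_w) = 0; consequently w − P_w is a Peirce-evanescent identity. -/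

import Mathlib

namespace Evanescent

universe u v

variable {T : Type u}

/-- The commutativity relation on the free magma on `T`. -/
inductive CommRel (T : Type u) : FreeMagma T → FreeMagma T → Prop
  | comm (a b : FreeMagma T) : CommRel T (a * b) (b * a)
  | mul_left {a b : FreeMagma T} (c : FreeMagma T) :
      CommRel T a b → CommRel T (a * c) (b * c)
  | mul_right (c : FreeMagma T) {a b : FreeMagma T} :
      CommRel T a b → CommRel T (c * a) (c * b)

/-- The free commutative magma on `T`: the set of commutative nonassociative
monomials (words) in the variables `T`. -/
def FreeCommMagma (T : Type u) : Type u := Quot (CommRel T)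

namespace FreeCommMagma

instance : Mul (FreeCommMagma T) :=
  ⟨Quot.map₂ (· * ·) (fun a _ _ h => CommRel.mul_right a h)
    (fun _ _ b h => CommRel.mul_left b h)⟩

/-- The class of a nonassociative word in the free commutative magma. -/
def mk (w : FreeMagma T) : FreeCommMagma T := Quot.mk (CommRel T) w

/-- The generator of the free commutative magma corresponding to a variable. -/
def of (t : T) : FreeCommMagma T := mk (FreeMagma.of t)

@[simp] lemma mk_mul (a b : FreeMagma T) : mk a * mk b = mk (a * b) := rfl

protected lemma mul_comm (a b : FreeCommMagma T) : a * b = b * a := by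
  induction a using Quot.ind
  induction b using Quot.ind
  exact Quot.sound (CommRel.comm _ _)

instance : CommMagma (FreeCommMagma T) := ⟨FreeCommMagma.mul_comm⟩

end FreeCommMagma

section Peirce

variable (R : Type v) [Semiring R] [DecidableEq T]

/-- The Peirce polynomial of a (noncommutative) nonassociative word, with
coefficients in `R`. -/
noncomputable def peirceAux (i : T) : FreeMagma T → Polynomial R
  | .of j => if j = i then 1 else 0
  | .mul u v => Polynomial.X * (peirceAux i u + peirceAux i v)

@[simp] lemma peirceAux_mul (i : T) (u v : FreeMagma T) :
    peirceAux R i (u * v) = Polynomial.X * (peirceAux R i u + peirceAux R i v) := rfl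

@[simp] lemma peirceAux_of (i j : T) :
    peirceAux R i (FreeMagma.of j) = if j = i then 1 else 0 := rfl

/-- The number of occurrences of the variable `i` in a nonassociative word. -/
def countAux (i : T) : FreeMagma T → ℕ
  | .of j => if j = i then 1 else 0
  | .mul u v => countAux i u + countAux i v

@[simp] lemma countAux_mul (i : T) (u v : FreeMagma T) :
    countAux i (u * v) = countAux i u + countAux i v := rfl

lemma peirceAux_respects (i : T) {a b : FreeMagma T} (h : CommRel T a b) :
    peirceAux R i a = peirceAux R i b := by
  induction h with
  | comm a b => simp [add_comm]
  | mul_left c h ih => simp [ih]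
  | mul_right c h ih => simp [ih]

lemma countAux_respects (i : T) {a b : FreeMagma T} (h : CommRel T a b) :
    countAux i a = countAux i b := by
  induction h with
  | comm a b => simp [Nat.add_comm]
  | mul_left c h ih => simp [ih]
  | mul_right c h ih => simp [ih]

/-- The Peirce polynomial `∂ᵢ(w)` of a commutative nonassociative monomial `w`,
determined by `∂ᵢ(tᵢ) = 1`, `∂ᵢ(tⱼ) = 0` for `j ≠ i`, and
`∂ᵢ(u·v) = X·(∂ᵢ(u) + ∂ᵢ(v))`. -/
noncomputable def FreeCommMagma.peirce (i : T) : FreeCommMagma T → Polynomial R :=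
  Quot.lift (peirceAux R i) fun _ _ h => peirceAux_respects R i h

/-- The number of occurrences (degree) of the variable `i` in a commutative
nonassociative monomial. -/
def FreeCommMagma.count (i : T) : FreeCommMagma T → ℕ :=
  Quot.lift (countAux i) fun _ _ h => countAux_respects i h

end Peirce

/-- Principal powers of an element of a magma: `ppow a n = a^(n+1)`,
i.e. `ppow a 0 = a` and `ppow a (n+1) = a * (ppow a n)`. -/
def ppow {M : Type v} [Mul M] (a : M) : ℕ → M
  | 0 => a
  | n + 1 => a * ppow a n

/-- Iterated left multiplication: `lpow a r g = a^{{r}} g`, i.e. `lpow a 0 g = g` and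
`lpow a (r+1) g = a * (lpow a r g)`. -/
def lpow {M : Type v} [Mul M] (a : M) : ℕ → M → M
  | 0, g => g
  | r + 1, g => a * lpow a r g

section Algebra

variable (K : Type v) [Field K]

/-- A commutative nonassociative monomial, viewed as an element of the free
commutative nonassociative algebra `K(T)` (realized as the magma algebra of the
free commutative magma). -/
noncomputable def mono (w : FreeCommMagma T) : MonoidAlgebra K (FreeCommMagma T) :=
  MonoidAlgebra.single w 1

/-- The augmentation (sum of the coefficients) of an element of the free
commutative nonassociative algebra. -/
noncomputable def aug : MonoidAlgebra K (FreeCommMagma T) →ₗ[K] K :=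
  (Finsupp.lsum K fun _ => LinearMap.id) ∘ₗ
    (MonoidAlgebra.coeffLinearEquiv K).toLinearMap

/-- The Peirce polynomial `∂ᵢ : K(T) → K[X]`, the `K`-linear map determined on
monomials by `∂ᵢ(tᵢ) = 1`, `∂ᵢ(tⱼ) = 0` for `j ≠ i`, and `∂ᵢ(u·v) = X·(∂ᵢ(u) + ∂ᵢ(v))`. -/
noncomputable def Dp [DecidableEq T] (i : T) :
    MonoidAlgebra K (FreeCommMagma T) →ₗ[K] Polynomial K :=
  (Finsupp.lsum K fun w => LinearMap.toSpanSingleton K (Polynomial K)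
    (FreeCommMagma.peirce K i w)) ∘ₗ (MonoidAlgebra.coeffLinearEquiv K).toLinearMap

/-- The free commutative nonassociative algebra is commutative. -/
lemma fca_mul_comm (f g : MonoidAlgebra K (FreeCommMagma T)) : f * g = g * f := by
  rw [MonoidAlgebra.mul_def, MonoidAlgebra.mul_def, Finsupp.sum_comm]
  refine Finsupp.sum_congr fun a _ => Finsupp.sum_congr fun c _ => ?_
  rw [FreeCommMagma.mul_comm, mul_comm (f.coeff c) (g.coeff a)]

end Algebra

section Subst

variable (K : Type v) [Field K] {A : Type*} [Mul A]

/-- Evaluation of a nonassociative word under a substitution of the variables. -/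
def evalAux (ρ : T → A) : FreeMagma T → A
  | .of t => ρ t
  | .mul u v => evalAux ρ u * evalAux ρ v

@[simp] lemma evalAux_mul (ρ : T → A) (u v : FreeMagma T) :
    evalAux ρ (u * v) = evalAux ρ u * evalAux ρ v := rfl

/-- Evaluation of a commutative nonassociative monomial in a commutative magma
under a substitution of the variables. -/
def FreeCommMagma.eval (hA : ∀ a b : A, a * b = b * a) (ρ : T → A) :
    FreeCommMagma T → A :=
  Quot.lift (evalAux ρ) (by
    intro a b h
    induction h with
    | comm a b => exact hA _ _
    | mul_left c h ih => simp [ih]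
    | mul_right c h ih => simp [ih])

/-- The substitution homomorphism `ρ̂ : K(T) → A` extending a substitution
`ρ : T → A` of the variables, for `A` a commutative nonassociative `K`-algebra. -/
noncomputable def subst [AddCommMonoid A] [Module K A]
    (hA : ∀ a b : A, a * b = b * a) (ρ : T → A)
    (f : MonoidAlgebra K (FreeCommMagma T)) : A :=
  f.coeff.sum fun w c => c • FreeCommMagma.eval hA ρ w

end Subst

/-- The list of the leaves of a nonassociative word (a rooted binary tree with
leaves labeled by the variables), together with their heights. -/
def leaves : FreeMagma T → List (T × ℕ)
  | .of t => [(t, 0)]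
  | .mul u v => (leaves u ++ leaves v).map fun p => (p.1, p.2 + 1)

end Evanescent
namespace Evanescent

/-- The variable `x` of `K(x,y)`. -/
def x2 : FreeCommMagma (Fin 2) := FreeCommMagma.of 0

/-- The variable `y` of `K(x,y)`. -/
def y2 : FreeCommMagma (Fin 2) := FreeCommMagma.of 1

/-- The span of `{(x^{{r}}y)·y : 1 ≤ r ≤ n} ∪ {x^{{s}}y² : 0 ≤ s ≤ n}` in `K(x,y)`. -/
noncomputable def trainSpan2 (K : Type*) [Field K] (n : ℕ) :
    Submodule K (MonoidAlgebra K (FreeCommMagma (Fin 2))) :=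
  Submodule.span K
    (((fun r => mono K (lpow x2 r y2 * y2)) '' Set.Icc 1 n) ∪
     ((fun s => mono K (lpow x2 s (y2 * y2))) '' Set.Iic n))

end Evanescent

/-!
The Peirce pair `Φ = (∂ₓ, ∂_y)` maps the span `Vₙ` of `(x^{{r}}y)·y` (`1 ≤ r ≤ n`) and
`x^{{s}}y²` (`s ≤ n`) into the space `Wₙ` (`trainPairs`) of pairs `(p, q)` of polynomials
without constant term, of degree at most `n + 1`, with `2 (p(1/2) + q(1/2)) = q(1)`: for a
monomial of bidegree `(m, 2)` one has `p(1/2) + q(1/2) = 1` by Kraft's equality and `q(1) = 2`.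
In fact `Φ : Vₙ → Wₙ` is bijective: in degree `n + 2` the new generators `(x^{{n+1}}y)·y` and
`x^{{n+1}}y²` contribute the invertible triangular matrix `(1 0; 1 2)`, so both injectivity and
surjectivity reduce from `n + 1` to `n`. Part (i) is injectivity for `n = 1`. For (ii), `P_w` is
the preimage of `Φ(w)`; `ε(P_w) = 1` because `ε = (∂ₓ + ∂_y)(1/2)`, and `w - P_w ≠ 0` because
`w` is not one of the generators of `Vₙ`.
-/

namespace Evanescent

open Polynomial

namespace FreeCommMagma

variable {T : Type*}

@[elab_as_elim]
theorem induction_on {motive : FreeCommMagma T → Prop} (w : FreeCommMagma T)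
    (of : ∀ t, motive (of t)) (mul : ∀ a b, motive a → motive b → motive (a * b)) :
    motive w := by
  induction w using Quot.ind with | mk u => ?_
  induction u with
  | ih1 t => exact of t
  | ih2 a b ha hb => exact mul _ _ ha hb

variable [DecidableEq T]

@[simp] lemma count_of (i j : T) : count i (of j) = if j = i then 1 else 0 := rfl

@[simp] lemma count_mul (i : T) (a b : FreeCommMagma T) :
    count i (a * b) = count i a + count i b := by
  induction a using Quot.ind
  induction b using Quot.ind
  rfl

variable (R : Type*) [Semiring R]

@[simp] lemma peirce_of (i j : T) : peirce R i (of j) = if j = i then 1 else 0 := rfl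

@[simp] lemma peirce_mul (i : T) (a b : FreeCommMagma T) :
    peirce R i (a * b) = X * (peirce R i a + peirce R i b) := by
  induction a using Quot.ind
  induction b using Quot.ind
  rfl

lemma coeff_zero_peirce {i j : T} {w : FreeCommMagma T} (h : 2 ≤ count j w) :
    (peirce R i w).coeff 0 = 0 := by
  induction w using induction_on with
  | of t => simp only [count_of] at h; split_ifs at h <;> omega
  | mul a b _ _ => simp

lemma natDegree_peirce_lt [Fintype T] (i : T) (w : FreeCommMagma T) :
    (peirce R i w).natDegree < ∑ t, count t w := by
  induction w using induction_on with
  | of j => simp only [peirce_of, count_of]; split_ifs <;> simp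
  | mul a b ha hb =>
    have hX : (peirce R i (a * b)).natDegree ≤
        1 + max (peirce R i a).natDegree (peirce R i b).natDegree := by
      rw [peirce_mul]
      exact natDegree_mul_le.trans
        (add_le_add natDegree_X_le (natDegree_add_le _ _))
    simp only [count_mul, Finset.sum_add_distrib]
    omega

end FreeCommMagma

section lpow

variable {M : Type*} [Mul M] (a g : M)

@[simp] lemma lpow_zero : lpow a 0 g = g := rfl

@[simp] lemma lpow_succ (r : ℕ) : lpow a (r + 1) g = a * lpow a r g := rfl

end lpow

open FreeCommMagma

section General

variable {T : Type*} {K : Type*} [Field K]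

lemma aug_mono (w : FreeCommMagma T) : aug K (mono K w) = 1 := by
  simp [aug, mono, MonoidAlgebra.coeffLinearEquiv]

lemma coeff_eq_zero_of_mem_span_mono {S : Set (FreeCommMagma T)} {w : FreeCommMagma T}
    (hw : w ∉ S) {f : MonoidAlgebra K (FreeCommMagma T)}
    (hf : f ∈ Submodule.span K (mono K '' S)) : f.coeff w = 0 := by
  induction hf using Submodule.span_induction with
  | mem _ hv =>
    obtain ⟨v, hv, rfl⟩ := hv
    exact Finsupp.single_eq_of_ne (by rintro rfl; exact hw hv)
  | zero => rfl
  | add _ _ _ _ hf hg => simp [MonoidAlgebra.coeff_add, hf, hg]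
  | smul _ _ _ hf => simp [hf]

variable [DecidableEq T]

lemma eval_one_peirce (i : T) (w : FreeCommMagma T) :
    (peirce K i w).eval 1 = count i w := by
  induction w using induction_on with
  | of t => simp only [peirce_of, count_of]; split_ifs <;> simp
  | mul a b ha hb => simp [ha, hb]

/-- The monomials of `∂ₜ(w)` record the heights of the leaves of `w` labelled `t`, so this is
Kraft's equality `∑ 2^(-height) = 1` for the full binary tree `w`. -/
lemma sum_eval_peirce_inv_two [Fintype T] (h2 : (2 : K) ≠ 0) (w : FreeCommMagma T) :
    ∑ t, (peirce K t w).eval 2⁻¹ = 1 := by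
  induction w using induction_on with
  | of j => simp [apply_ite (Polynomial.eval _)]
  | mul a b ha hb =>
    simp only [peirce_mul, eval_mul, eval_X, eval_add, ← Finset.mul_sum,
      Finset.sum_add_distrib, ha, hb]
    field_simp
    norm_num

lemma Dp_mono (i : T) (w : FreeCommMagma T) : Dp K i (mono K w) = peirce K i w := by
  simp [Dp, mono, MonoidAlgebra.coeffLinearEquiv]

lemma aug_eq_eval_sum_Dp [Fintype T] (h2 : (2 : K) ≠ 0) (f : MonoidAlgebra K (FreeCommMagma T)) :
    aug K f = (∑ t, Dp K t f).eval 2⁻¹ := by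
  induction f using MonoidAlgebra.induction_linear with
  | zero => simp
  | add f g hf hg => simp only [map_add, Finset.sum_add_distrib, eval_add, hf, hg]
  | single w c =>
    rw [← mul_one c, ← smul_eq_mul, ← MonoidAlgebra.smul_single, ← mono]
    simp only [map_smul, aug_mono, Dp_mono, ← Finset.smul_sum, eval_smul,
      Polynomial.eval_finsetSum, sum_eval_peirce_inv_two h2]

lemma aug_eq_zero_of_Dp_eq_zero [Fintype T] (h2 : (2 : K) ≠ 0)
    {f : MonoidAlgebra K (FreeCommMagma T)} (hf : ∀ t, Dp K t f = 0) : aug K f = 0 := by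
  simp [aug_eq_eval_sum_Dp h2, hf]

end General

section TwoVariables

variable {K : Type*} [Field K]

@[simp] lemma count_x2 (i : Fin 2) : count i x2 = if i = 0 then 1 else 0 := by
  fin_cases i <;> rfl

@[simp] lemma count_y2 (i : Fin 2) : count i y2 = if i = 1 then 1 else 0 := by
  fin_cases i <;> rfl

@[simp] lemma peirce_x2 (i : Fin 2) : peirce K i x2 = if i = 0 then 1 else 0 := by
  fin_cases i <;> rfl

@[simp] lemma peirce_y2 (i : Fin 2) : peirce K i y2 = if i = 1 then 1 else 0 := by
  fin_cases i <;> rfl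

@[simp] lemma count_zero_lpow_x2 (r : ℕ) (g : FreeCommMagma (Fin 2)) :
    count 0 (lpow x2 r g) = r + count 0 g := by
  induction r with
  | zero => simp
  | succ r ih => simp [ih]; omega

@[simp] lemma count_one_lpow_x2 (r : ℕ) (g : FreeCommMagma (Fin 2)) :
    count 1 (lpow x2 r g) = count 1 g := by
  induction r with
  | zero => simp
  | succ r ih => simp [ih]

lemma peirce_zero_lpow_x2 (r : ℕ) (g : FreeCommMagma (Fin 2)) :
    peirce K 0 (lpow x2 r g) = ∑ j ∈ Finset.range r, X ^ (j + 1) + X ^ r * peirce K 0 g := by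
  induction r with
  | zero => simp
  | succ r ih =>
    rw [lpow_succ, peirce_mul, ih, peirce_x2, if_pos rfl, Finset.sum_range_succ', mul_add,
      mul_add, Finset.mul_sum]
    simp only [← pow_succ', ← mul_assoc]
    ring

lemma peirce_one_lpow_x2 (r : ℕ) (g : FreeCommMagma (Fin 2)) :
    peirce K 1 (lpow x2 r g) = X ^ r * peirce K 1 g := by
  induction r with
  | zero => simp
  | succ r ih => simp [ih, pow_succ]; ring

lemma coeff_sum_range_X_pow_succ (m : ℕ) :
    (∑ j ∈ Finset.range m, (X : K[X]) ^ (j + 1)).coeff (m + 1) = 0 := by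
  rw [finsetSum_coeff]
  refine Finset.sum_eq_zero fun j hj => ?_
  rw [coeff_X_pow, if_neg]
  simp only [Finset.mem_range] at hj
  omega

lemma coeff_peirce_zero_lpow_y2_mul_y2 (m : ℕ) :
    (peirce K 0 (lpow x2 (m + 1) y2 * y2)).coeff (m + 2) = 1 := by
  rw [peirce_mul, peirce_zero_lpow_x2, peirce_y2, if_neg (by decide), mul_zero, add_zero,
    add_zero, coeff_X_mul, Finset.sum_range_succ, coeff_add, coeff_sum_range_X_pow_succ,
    coeff_X_pow_self, zero_add]

lemma coeff_peirce_zero_lpow_mul_self_y2 (m : ℕ) :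
    (peirce K 0 (lpow x2 m (y2 * y2))).coeff (m + 1) = 0 := by
  simp [peirce_zero_lpow_x2]

lemma coeff_peirce_one_lpow_y2_mul_y2 (m : ℕ) :
    (peirce K 1 (lpow x2 (m + 1) y2 * y2)).coeff (m + 2) = 1 := by
  simp [peirce_one_lpow_x2, coeff_X_mul, coeff_one]

lemma coeff_peirce_one_lpow_mul_self_y2 (m : ℕ) :
    (peirce K 1 (lpow x2 m (y2 * y2))).coeff (m + 1) = 2 := by
  simp [peirce_one_lpow_x2, coeff_X_pow_mul', one_add_one_eq_two]

def trainWords (n : ℕ) : Set (FreeCommMagma (Fin 2)) :=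
  (fun r => lpow x2 r y2 * y2) '' Set.Icc 1 n ∪ (fun s => lpow x2 s (y2 * y2)) '' Set.Iic n

lemma trainSpan2_eq_span_trainWords (n : ℕ) :
    trainSpan2 K n = Submodule.span K (mono K '' trainWords n) := by
  rw [trainSpan2, trainWords, Set.image_union, Set.image_image, Set.image_image]

lemma trainWords_zero : trainWords 0 = {y2 * y2} := by
  ext w
  simp [trainWords, eq_comm]

lemma trainWords_succ (n : ℕ) :
    trainWords (n + 1) =
      insert (lpow x2 (n + 1) y2 * y2) (insert (lpow x2 (n + 1) (y2 * y2)) (trainWords n)) := by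
  have hIcc : Set.Icc 1 (n + 1) = insert (n + 1) (Set.Icc 1 n) := by ext; simp; omega
  have hIic : Set.Iic (n + 1) = insert (n + 1) (Set.Iic n) := by ext; simp; omega
  rw [trainWords, trainWords, hIcc, hIic, Set.image_insert_eq, Set.image_insert_eq,
    Set.insert_union, Set.union_insert]

lemma count_of_mem_trainWords {n : ℕ} {w : FreeCommMagma (Fin 2)} (hw : w ∈ trainWords n) :
    count 0 w ≤ n ∧ count 1 w = 2 := by
  rcases hw with ⟨r, hr, rfl⟩ | ⟨s, hs, rfl⟩ <;> simp_all

lemma eq_or_eq_of_mem_trainWords {n : ℕ} {w : FreeCommMagma (Fin 2)} (hw : w ∈ trainWords n)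
    (hn : count 0 w = n) : w = lpow x2 n y2 * y2 ∨ w = lpow x2 n (y2 * y2) := by
  rcases hw with ⟨r, -, rfl⟩ | ⟨s, -, rfl⟩ <;> simp_all

lemma mem_trainSpan2_succ {n : ℕ} {f : MonoidAlgebra K (FreeCommMagma (Fin 2))} :
    f ∈ trainSpan2 K (n + 1) ↔ ∃ a b : K, ∃ g ∈ trainSpan2 K n, f =
      a • mono K (lpow x2 (n + 1) y2 * y2) + b • mono K (lpow x2 (n + 1) (y2 * y2)) + g := by
  simp only [trainSpan2_eq_span_trainWords, trainWords_succ, Set.image_insert_eq,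
    Submodule.mem_span_insert]
  constructor
  · rintro ⟨a, _, ⟨b, g, hg, rfl⟩, rfl⟩
    exact ⟨a, b, g, hg, (add_assoc _ _ _).symm⟩
  · rintro ⟨a, b, g, hg, rfl⟩
    exact ⟨a, _, ⟨b, g, hg, rfl⟩, add_assoc _ _ _⟩

noncomputable def peircePair (K : Type*) [Field K] :
    MonoidAlgebra K (FreeCommMagma (Fin 2)) →ₗ[K] K[X] × K[X] :=
  (Dp K 0).prod (Dp K 1)

lemma peircePair_eq_zero_iff {f : MonoidAlgebra K (FreeCommMagma (Fin 2))} :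
    peircePair K f = 0 ↔ ∀ i, Dp K i f = 0 := by
  simp [peircePair, Prod.ext_iff, Fin.forall_fin_two]

lemma peircePair_mono (w : FreeCommMagma (Fin 2)) :
    peircePair K (mono K w) = (peirce K 0 w, peirce K 1 w) := by
  simp [peircePair, Dp_mono]

/-- On the Peirce pair `(∂ₓf, ∂_yf)` of a combination `f` of monomials of bidegree `(m, 2)`,
both sides of the last condition equal `2 ε(f)`. -/
noncomputable def trainPairs (K : Type*) [Field K] (n : ℕ) : Submodule K (K[X] × K[X]) where
  carrier := {pq | pq.1.coeff 0 = 0 ∧ pq.2.coeff 0 = 0 ∧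
    pq.1.natDegree ≤ n + 1 ∧ pq.2.natDegree ≤ n + 1 ∧
    2 * (pq.1.eval 2⁻¹ + pq.2.eval 2⁻¹) = pq.2.eval 1}
  add_mem' := by
    rintro ⟨p, q⟩ ⟨p', q'⟩ ⟨hp, hq, hpd, hqd, he⟩ ⟨hp', hq', hpd', hqd', he'⟩
    refine ⟨by simp [hp, hp'], by simp [hq, hq'], natDegree_add_le_of_degree_le hpd hpd',
      natDegree_add_le_of_degree_le hqd hqd', ?_⟩
    simp only [Prod.fst_add, Prod.snd_add, eval_add]
    linear_combination he + he'
  zero_mem' := by simp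
  smul_mem' := by
    rintro c ⟨p, q⟩ ⟨hp, hq, hpd, hqd, he⟩
    refine ⟨by simp [hp], by simp [hq], (natDegree_smul_le c p).trans hpd,
      (natDegree_smul_le c q).trans hqd, ?_⟩
    simp only [Prod.smul_fst, Prod.smul_snd, eval_smul, smul_eq_mul]
    linear_combination c * he

lemma peircePair_mono_mem_trainPairs (h2 : (2 : K) ≠ 0) {n : ℕ} {w : FreeCommMagma (Fin 2)}
    (h0 : count 0 w ≤ n) (h1 : count 1 w = 2) : peircePair K (mono K w) ∈ trainPairs K n := by
  have hdeg (i : Fin 2) : (peirce K i w).natDegree ≤ n + 1 := by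
    have := natDegree_peirce_lt K i w
    rw [Fin.sum_univ_two] at this
    omega
  have hkraft := sum_eval_peirce_inv_two h2 w
  rw [Fin.sum_univ_two] at hkraft
  rw [peircePair_mono]
  refine ⟨coeff_zero_peirce K h1.ge, coeff_zero_peirce K h1.ge, hdeg 0, hdeg 1, ?_⟩
  rw [hkraft, eval_one_peirce, h1]
  norm_num

lemma peircePair_mem_trainPairs (h2 : (2 : K) ≠ 0) {n : ℕ}
    {f : MonoidAlgebra K (FreeCommMagma (Fin 2))} (hf : f ∈ trainSpan2 K n) :
    peircePair K f ∈ trainPairs K n := by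
  rw [trainSpan2_eq_span_trainWords] at hf
  refine (Submodule.span_le.mpr ?_ : _ ≤ (trainPairs K n).comap (peircePair K)) hf
  rintro _ ⟨w, hw, rfl⟩
  exact peircePair_mono_mem_trainPairs h2 (count_of_mem_trainWords hw).1
    (count_of_mem_trainWords hw).2

lemma mem_trainPairs_of_coeff_eq_zero {n : ℕ} {pq : K[X] × K[X]}
    (h : pq ∈ trainPairs K (n + 1)) (h1 : pq.1.coeff (n + 2) = 0)
    (h2 : pq.2.coeff (n + 2) = 0) : pq ∈ trainPairs K n := by
  obtain ⟨hp, hq, hpd, hqd, he⟩ := h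
  exact ⟨hp, hq, natDegree_le_pred hpd h1, natDegree_le_pred hqd h2, he⟩

lemma coeff_peircePair_smul_add_smul (n : ℕ) (a b : K) :
    (peircePair K (a • mono K (lpow x2 (n + 1) y2 * y2) +
        b • mono K (lpow x2 (n + 1) (y2 * y2)))).1.coeff (n + 2) = a ∧
    (peircePair K (a • mono K (lpow x2 (n + 1) y2 * y2) +
        b • mono K (lpow x2 (n + 1) (y2 * y2)))).2.coeff (n + 2) = a + 2 * b := by
  simp only [map_add, map_smul, peircePair_mono, Prod.fst_add, Prod.snd_add, Prod.smul_fst,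
    Prod.smul_snd, coeff_add, coeff_smul, smul_eq_mul, coeff_peirce_zero_lpow_y2_mul_y2,
    coeff_peirce_zero_lpow_mul_self_y2, coeff_peirce_one_lpow_y2_mul_y2,
    coeff_peirce_one_lpow_mul_self_y2]
  constructor <;> ring

lemma peircePair_mono_y2_mul_y2 :
    peircePair K (mono K (y2 * y2)) = (0, 2 * X) := by
  rw [peircePair_mono, peirce_mul, peirce_mul, peirce_y2, peirce_y2]
  simp only [Fin.reduceEq, if_false, if_true, add_zero, zero_mul, one_add_one_eq_two, mul_comm]

theorem eq_zero_of_mem_trainSpan2_of_peircePair_eq_zero (h2 : (2 : K) ≠ 0) {n : ℕ}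
    {f : MonoidAlgebra K (FreeCommMagma (Fin 2))} (hf : f ∈ trainSpan2 K n)
    (hΦ : peircePair K f = 0) : f = 0 := by
  induction n generalizing f with
  | zero =>
    rw [trainSpan2_eq_span_trainWords, trainWords_zero, Set.image_singleton,
      Submodule.mem_span_singleton] at hf
    obtain ⟨c, rfl⟩ := hf
    have hc := congrArg (fun pq => pq.2.coeff 1) hΦ
    simp only [map_smul, peircePair_mono_y2_mul_y2, Prod.smul_snd, coeff_smul, coeff_ofNat_mul,
      coeff_X_one, smul_eq_mul, Prod.snd_zero, coeff_zero, mul_one] at hc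
    simp [(mul_eq_zero.mp hc).resolve_right h2]
  | succ n ih =>
    obtain ⟨a, b, g, hg, rfl⟩ := mem_trainSpan2_succ.mp hf
    obtain ⟨ha, hb⟩ := coeff_peircePair_smul_add_smul n a b
    obtain ⟨-, -, hg0, hg1, -⟩ := peircePair_mem_trainPairs h2 hg
    rw [map_add] at hΦ
    have hc0 := congrArg (fun pq => pq.1.coeff (n + 2)) hΦ
    have hc1 := congrArg (fun pq => pq.2.coeff (n + 2)) hΦ
    simp only [Prod.fst_add, Prod.snd_add, coeff_add, ha, hb, Prod.fst_zero, Prod.snd_zero,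
      coeff_eq_zero_of_natDegree_lt (show (peircePair K g).1.natDegree < n + 2 by omega),
      coeff_eq_zero_of_natDegree_lt (show (peircePair K g).2.natDegree < n + 2 by omega),
      coeff_zero, add_zero] at hc0 hc1
    obtain rfl : a = 0 := hc0
    obtain rfl : b = 0 := by simpa [h2] using hc1
    simp only [zero_smul, zero_add, map_zero] at hΦ ⊢
    exact ih hg hΦ

theorem exists_mem_trainSpan2_peircePair_eq (h2 : (2 : K) ≠ 0) {n : ℕ} {pq : K[X] × K[X]}
    (h : pq ∈ trainPairs K n) : ∃ f ∈ trainSpan2 K n, peircePair K f = pq := by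
  induction n generalizing pq with
  | zero =>
    obtain ⟨p, q⟩ := pq
    obtain ⟨hp, hq, hpd, hqd, he⟩ := h
    have hpX : p = C (p.coeff 1) * X := by simpa [hp] using eq_X_add_C_of_natDegree_le_one hpd
    have hqX : q = C (q.coeff 1) * X := by simpa [hq] using eq_X_add_C_of_natDegree_le_one hqd
    have hp1 : p.coeff 1 = 0 := by
      rw [hpX, hqX] at he
      simp only [eval_mul, eval_C, eval_X, mul_one] at he
      linear_combination he - (p.coeff 1 + q.coeff 1) * mul_inv_cancel₀ h2
    refine ⟨(q.coeff 1 / 2) • mono K (y2 * y2), Submodule.smul_mem _ _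
      (Submodule.subset_span (Or.inr ⟨0, Set.mem_Iic.mpr le_rfl, rfl⟩)), ?_⟩
    rw [map_smul, peircePair_mono_y2_mul_y2, Prod.smul_mk, smul_zero, Prod.mk.injEq]
    refine ⟨by rw [hpX, hp1, C_0, zero_mul], ?_⟩
    conv_rhs => rw [hqX]
    rw [smul_eq_C_mul, ← mul_assoc, ← C_ofNat, ← C_mul, div_mul_cancel₀ _ h2]
  | succ n ih =>
    set a := pq.1.coeff (n + 2)
    set b := (pq.2.coeff (n + 2) - a) / 2
    set f₀ := a • mono K (lpow x2 (n + 1) y2 * y2) + b • mono K (lpow x2 (n + 1) (y2 * y2))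
    have hf₀ : f₀ ∈ trainSpan2 K (n + 1) :=
      mem_trainSpan2_succ.mpr ⟨a, b, 0, zero_mem _, (add_zero _).symm⟩
    obtain ⟨ha, hb⟩ := coeff_peircePair_smul_add_smul n a b
    have hrest : pq - peircePair K f₀ ∈ trainPairs K n := by
      refine mem_trainPairs_of_coeff_eq_zero (sub_mem h (peircePair_mem_trainPairs h2 hf₀)) ?_ ?_
      · rw [Prod.fst_sub, coeff_sub, ha, sub_self]
      · rw [Prod.snd_sub, coeff_sub, hb, mul_div_cancel₀ _ h2]
        ring
    obtain ⟨g, hg, hΦg⟩ := ih hrest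
    refine ⟨f₀ + g, mem_trainSpan2_succ.mpr ⟨a, b, g, hg, rfl⟩, ?_⟩
    rw [map_add, hΦg, add_sub_cancel]

end TwoVariables

end Evanescent

open Evanescent in
/-- (i) There is no train Peirce-evanescent identity of degree `(1,2)`;
(ii) for `n ≥ 2` and every monomial `w` of bidegree `(n,2)` other than `(x^{{n}}y)·y` and
`x^{{n}}y²` there is a unique `P_w` in the span of
`{(x^{{r}}y)·y : 1 ≤ r ≤ n} ∪ {x^{{s}}y² : 0 ≤ s ≤ n}` with `ε(P_w) = 1` and
`∂ₓ(w − P_w) = ∂_y(w − P_w) = 0`; consequently `w − P_w` is a Peirce-evanescent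
identity. -/
theorem train_identities_bidegree_n_two
    {K : Type*} [Field K] (hchar : (2 : K) ≠ 0) :
    (∀ a b c : K,
      (∀ i : Fin 2, Dp K i (a • mono K ((x2 * y2) * y2) + b • mono K (x2 * (y2 * y2))
        + c • mono K (y2 * y2)) = 0) →
      a • mono K ((x2 * y2) * y2) + b • mono K (x2 * (y2 * y2))
        + c • mono K (y2 * y2) = 0) ∧
    (∀ n : ℕ, 2 ≤ n → ∀ w : FreeCommMagma (Fin 2),
      FreeCommMagma.count 0 w = n → FreeCommMagma.count 1 w = 2 →
      w ≠ lpow x2 n y2 * y2 → w ≠ lpow x2 n (y2 * y2) →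
      (∃! P : MonoidAlgebra K (FreeCommMagma (Fin 2)),
        P ∈ trainSpan2 K n ∧ aug K P = 1 ∧
        ∀ i : Fin 2, Dp K i (mono K w - P) = 0) ∧
      (∀ P : MonoidAlgebra K (FreeCommMagma (Fin 2)),
        P ∈ trainSpan2 K n → aug K P = 1 →
        (∀ i : Fin 2, Dp K i (mono K w - P) = 0) →
        mono K w - P ≠ 0 ∧ aug K (mono K w - P) = 0)) := by
  refine ⟨fun a b c h => eq_zero_of_mem_trainSpan2_of_peircePair_eq_zero hchar (n := 1) ?_
    (peircePair_eq_zero_iff.mpr h), ?_⟩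
  · refine add_mem (add_mem ?_ ?_) ?_ <;> refine Submodule.smul_mem _ _ (Submodule.subset_span ?_)
    exacts [Or.inl ⟨1, ⟨le_rfl, le_rfl⟩, rfl⟩, Or.inr ⟨1, Set.mem_Iic.mpr le_rfl, rfl⟩,
      Or.inr ⟨0, Set.mem_Iic.mpr zero_le_one, rfl⟩]
  intro n _ w hw0 hw1 hne₁ hne₂
  have hΦ_iff (Q : MonoidAlgebra K (FreeCommMagma (Fin 2))) :
      (∀ i, Dp K i (mono K w - Q) = 0) ↔ peircePair K Q = peircePair K (mono K w) := by
    rw [← peircePair_eq_zero_iff, map_sub, sub_eq_zero, eq_comm]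
  have haug (Q : MonoidAlgebra K (FreeCommMagma (Fin 2)))
      (hQ : ∀ i, Dp K i (mono K w - Q) = 0) : aug K Q = 1 := by
    have := aug_eq_zero_of_Dp_eq_zero hchar hQ
    rwa [map_sub, aug_mono, sub_eq_zero, eq_comm] at this
  obtain ⟨P, hP, hΦP⟩ := exists_mem_trainSpan2_peircePair_eq hchar
    (peircePair_mono_mem_trainPairs hchar hw0.le hw1)
  have hPD := (hΦ_iff P).mpr hΦP
  refine ⟨⟨P, ⟨hP, haug P hPD, hPD⟩, fun Q ⟨hQ, _, hQD⟩ => ?_⟩,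
    fun Q hQ hQaug _ => ⟨?_, ?_⟩⟩
  · refine sub_eq_zero.mp
      (eq_zero_of_mem_trainSpan2_of_peircePair_eq_zero hchar (sub_mem hQ hP) ?_)
    rw [map_sub, (hΦ_iff Q).mp hQD, hΦP, sub_self]
  · have hw : w ∉ trainWords n := fun hw =>
      (eq_or_eq_of_mem_trainWords hw hw0).elim hne₁ hne₂
    rw [trainSpan2_eq_span_trainWords] at hQ
    intro h
    simpa [mono, coeff_eq_zero_of_mem_span_mono hw hQ] using congrArg (·.coeff w) h
  · rw [map_sub, aug_mono, hQaug, sub_self]
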